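/- arXiv:1903.09825 — 2 statements merged into one kernel-verified Lean document; each statement's English description precedes it below -/
import Mathlib

section
/- Let X be a nonempty finite set and B a family of subsets of X such that not all members of B have the same cardinality and every element of X lies in some member of B. Then there exists x0 in X such that the average cardinality of the members of B strictly exceeds the average cardinality of the members of B that do not contain x0. -/
/-! Let `n = |B|`, `S = ∑ |A|`, and for `x` let `d x` and `s x` be the number and the total size
of the members of `B` containing `x`. Double counting gives `∑ₓ d x = S` and `∑ₓ s x = ∑ |A|²`,
and `S² < n ∑ |A|²` by the strict Cauchy–Schwarz inequality, since the sizes are not all equal.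
Hence `S · d x < n · s x` for some `x`, which says precisely that discarding the members
containing `x` lowers the average size. -/

open Finset Polynomial

namespace AvgMatching

variable {V : Type*} [Fintype V] [DecidableEq V]

/-- A matching of `G`, viewed as a finite set of edges of `G`
no two of which share a vertex. -/
def IsMatchingSet (G : SimpleGraph V) (A : Finset (Sym2 V)) : Prop :=
  ↑A ⊆ G.edgeSet ∧ (A : Set (Sym2 V)).Pairwise fun e f => ∀ v : V, v ∈ e → v ∉ f

open Classical in
/-- The finite set of all matchings of `G` (including the empty matching). -/
noncomputable def matchings (G : SimpleGraph V) : Finset (Finset (Sym2 V)) :=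
  Finset.univ.filter (IsMatchingSet G)

/-- `M(G)`: the number of matchings of `G` (including the empty one). -/
noncomputable def numM (G : SimpleGraph V) : ℕ := (matchings G).card

/-- `S(G)`: the sum of the sizes of all matchings of `G`. -/
noncomputable def totS (G : SimpleGraph V) : ℕ := ∑ A ∈ matchings G, A.card

/-- `avm(G) = S(G)/M(G)`: the average size of a matching of `G`. -/
noncomputable def avm (G : SimpleGraph V) : ℚ := (totS G : ℚ) / (numM G)

/-- `m(G,k)`: the number of matchings of size `k` in `G`. -/
noncomputable def mCount (G : SimpleGraph V) (k : ℕ) : ℕ :=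
  ((matchings G).filter fun A => A.card = k).card

/-- `μ(G)`: the matching number of `G`. -/
noncomputable def matchNum (G : SimpleGraph V) : ℕ := (matchings G).sup Finset.card

/-- Delete a vertex `u` (keeping it as an isolated vertex, which does not
affect matchings): all edges incident to `u` are removed. -/
def delVert (G : SimpleGraph V) (u : V) : SimpleGraph V :=
  G.deleteEdges {e : Sym2 V | u ∈ e}

theorem sq_sum_lt_card_mul_sum_sq {ι R : Type*} [CommRing R] [LinearOrder R]
    [IsStrictOrderedRing R] {s : Finset ι} {f : ι → R} (h : ∃ i ∈ s, ∃ j ∈ s, f i ≠ f j) :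
    (∑ i ∈ s, f i) ^ 2 < #s * ∑ i ∈ s, f i ^ 2 := by
  obtain ⟨i, hi, j, hj, hij⟩ := h
  have lagrange : ∑ i ∈ s, ∑ j ∈ s, (f i - f j) ^ 2
      = 2 * (#s * ∑ i ∈ s, f i ^ 2 - (∑ i ∈ s, f i) ^ 2) := by
    simp only [sub_sq, sum_add_distrib, sum_sub_distrib, sum_const, nsmul_eq_mul, ← mul_sum,
      ← sum_mul]
    ring
  have hpos : 0 < ∑ i ∈ s, ∑ j ∈ s, (f i - f j) ^ 2 := by
    have : (f i - f j) ^ 2 ≠ 0 := pow_ne_zero 2 (sub_ne_zero.mpr hij)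
    refine sum_pos' (fun _ _ => sum_nonneg fun _ _ => sq_nonneg _) ⟨i, hi, ?_⟩
    exact sum_pos' (fun _ _ => sq_nonneg _) ⟨j, hj, lt_of_le_of_ne (sq_nonneg _) this.symm⟩
  linarith

theorem sub_div_sub_lt_div {K : Type*} [Field K] [LinearOrder K] [IsStrictOrderedRing K]
    {a b c d : K} (hd : 0 < d) (hcd : c ≤ d) (hba : b ≤ a) (h : a * c < d * b) :
    (a - b) / (d - c) < a / d := by
  have hdc : 0 < d - c := by
    rcases hcd.lt_or_eq with hcd | rfl
    · linarith
    · nlinarith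
  rw [div_lt_div_iff₀ hdc hd]
  linarith

section AverageCard

variable {α : Type*} [DecidableEq α]

theorem sum_sum_filter_mem_eq_sum_card_smul {M : Type*} [AddCommMonoid M]
    (B : Finset (Finset α)) {U : Finset α} (hU : ∀ A ∈ B, A ⊆ U) (f : Finset α → M) :
    ∑ x ∈ U, ∑ A ∈ B with x ∈ A, f A = ∑ A ∈ B, #A • f A := by
  rw [sum_comm' (t' := B) (s' := id)]
  · simp only [id, sum_const]
  · intro x A
    simp only [mem_filter, id]
    exact ⟨fun ⟨_, hA, hx⟩ => ⟨hx, hA⟩, fun ⟨hx, hA⟩ => ⟨hU A hA hx, hA, hx⟩⟩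

def avgCard (B : Finset (Finset α)) : ℚ := (∑ A ∈ B, (#A : ℚ)) / #B

theorem exists_avgCard_filter_notMem_lt (B : Finset (Finset α))
    (hne : ∃ A ∈ B, ∃ A' ∈ B, #A ≠ #A') :
    ∃ x, avgCard {A ∈ B | x ∉ A} < avgCard B := by
  set n : ℚ := (#B : ℚ)
  set S : ℚ := ∑ A ∈ B, (#A : ℚ)
  set s : α → ℚ := fun x => ∑ A ∈ B with x ∈ A, (#A : ℚ)
  set d : α → ℚ := fun x => ∑ A ∈ B with x ∈ A, 1
  have hU : ∀ A ∈ B, A ⊆ B.sup id := fun A hA => le_sup (f := id) hA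
  obtain ⟨x, -, hx⟩ : ∃ x ∈ B.sup id, S * d x < n * s x := by
    apply exists_lt_of_sum_lt
    rw [← mul_sum, ← mul_sum, sum_sum_filter_mem_eq_sum_card_smul B hU,
      sum_sum_filter_mem_eq_sum_card_smul B hU]
    simpa [sq] using sq_sum_lt_card_mul_sum_sq (f := fun A : Finset α => (#A : ℚ)) (by
      obtain ⟨A, hA, A', hA', h⟩ := hne
      exact ⟨A, hA, A', hA', by exact_mod_cast h⟩)
  have hsum : ∑ A ∈ B with x ∉ A, (#A : ℚ) = S - s x :=
    eq_sub_of_add_eq' (sum_filter_add_sum_filter_not B (x ∈ ·) _)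
  have hcard : (#{A ∈ B | x ∉ A} : ℚ) = n - d x := by
    refine eq_sub_of_add_eq' ?_
    simp only [d, n, sum_const, nsmul_eq_mul, mul_one]
    exact_mod_cast card_filter_add_card_filter_not (s := B) (x ∈ ·)
  have hs : s x ≤ S :=
    sum_le_sum_of_subset_of_nonneg (filter_subset _ _) fun _ _ _ => by positivity
  have hd : d x ≤ n := by
    simpa [d, n] using card_filter_le B (x ∈ ·)
  have hn : 0 < n := by
    obtain ⟨A, hA, -⟩ := hne
    exact Nat.cast_pos.mpr (card_pos.mpr ⟨A, hA⟩)
  refine ⟨x, ?_⟩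
  show (∑ A ∈ B with x ∉ A, (#A : ℚ)) / #{A ∈ B | x ∉ A} < S / n
  rw [hsum, hcard]
  exact sub_div_sub_lt_div hn hd hs hx

end AverageCard

theorem exists_elem_average_drops_general {X : Type*} [DecidableEq X]
    (B : Finset (Finset X))
    (hne : ∃ A ∈ B, ∃ A' ∈ B, A.card ≠ A'.card) :
    ∃ x0 : X,
      (∑ A ∈ B.filter fun A => x0 ∉ A, (A.card : ℚ)) / ((B.filter fun A => x0 ∉ A).card : ℚ) <
        (∑ A ∈ B, (A.card : ℚ)) / (B.card : ℚ) :=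
  exists_avgCard_filter_notMem_lt B hne

theorem exists_elem_average_drops {X : Type*} [Fintype X] [DecidableEq X] [Nonempty X]
    (B : Finset (Finset X))
    (hne : ∃ A ∈ B, ∃ A' ∈ B, A.card ≠ A'.card)
    (hcover : ∀ x : X, ∃ A ∈ B, x ∈ A) :
    ∃ x0 : X,
      (∑ A ∈ B.filter fun A => x0 ∉ A, (A.card : ℚ)) / ((B.filter fun A => x0 ∉ A).card : ℚ) <
        (∑ A ∈ B, (A.card : ℚ)) / (B.card : ℚ) :=
  exists_elem_average_drops_general B hne

end AvgMatching
end

section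
/- For every n-vertex graph G and all integers k, l with 0 ≤ l ≤ k ≤ μ(G), one has m(K_n, l) * m(G, k) ≤ m(K_n, k) * m(G, l). -/
open Finset Polynomial

namespace AvgMatching

variable {V : Type*} [Fintype V] [DecidableEq V]

/-! ### Auxiliary development -/

/-- Vertices covered by a set of edges. -/
noncomputable def cov (M : Finset (Sym2 V)) : Finset V :=
  M.biUnion (fun e => Finset.univ.filter (· ∈ e))

lemma mem_cov {M : Finset (Sym2 V)} {v : V} : v ∈ cov M ↔ ∃ e ∈ M, v ∈ e := by
  simp [cov]

open Classical in
/-- Edges of `G` that can extend the matching `M`. -/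
noncomputable def extE (G : SimpleGraph V) (M : Finset (Sym2 V)) : Finset (Sym2 V) :=
  Finset.univ.filter (fun e => e ∈ G.edgeSet ∧ ∀ v ∈ e, v ∉ cov M)

lemma mem_matchings {G : SimpleGraph V} {A : Finset (Sym2 V)} :
    A ∈ matchings G ↔ IsMatchingSet G A := by
  simp [matchings]

lemma mem_extE {G : SimpleGraph V} {M : Finset (Sym2 V)} {e : Sym2 V} :
    e ∈ extE G M ↔ e ∈ G.edgeSet ∧ ∀ v ∈ e, v ∉ cov M := by
  simp [extE]

lemma rel_symm : Symmetric (fun e f : Sym2 V => ∀ v : V, v ∈ e → v ∉ f) :=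
  fun _ _ h v hvf hve => h v hve hvf

lemma isMatchingSet_erase {G : SimpleGraph V} {M : Finset (Sym2 V)}
    (hM : IsMatchingSet G M) (e : Sym2 V) : IsMatchingSet G (M.erase e) := by
  have hsub : (↑(M.erase e) : Set (Sym2 V)) ⊆ ↑M :=
    Finset.coe_subset.mpr (Finset.erase_subset e M)
  exact ⟨hsub.trans hM.1, hM.2.mono hsub⟩

lemma mem_extE_erase {G : SimpleGraph V} {M : Finset (Sym2 V)}
    (hM : IsMatchingSet G M) {e : Sym2 V} (he : e ∈ M) :
    e ∈ extE G (M.erase e) := by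
  classical
  rw [mem_extE]
  refine ⟨hM.1 he, ?_⟩
  intro v hv hvcov
  rw [mem_cov] at hvcov
  obtain ⟨f, hf, hvf⟩ := hvcov
  have hfe : f ≠ e := Finset.ne_of_mem_erase hf
  exact hM.2 (Finset.mem_coe.mpr he) (Finset.mem_coe.mpr (Finset.mem_of_mem_erase hf))
    hfe.symm v hv hvf

lemma insert_matching {G : SimpleGraph V} {M : Finset (Sym2 V)} {e : Sym2 V}
    (hM : IsMatchingSet G M) (he : e ∈ extE G M) :
    IsMatchingSet G (insert e M) ∧ e ∉ M := by
  classical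
  rw [mem_extE] at he
  obtain ⟨heG, hdisj⟩ := he
  have henotM : e ∉ M := by
    intro h
    exact hdisj e.out.1 (Sym2.out_fst_mem e) (mem_cov.mpr ⟨e, h, Sym2.out_fst_mem e⟩)
  refine ⟨⟨?_, ?_⟩, henotM⟩
  · rw [Finset.coe_insert]
    exact Set.insert_subset heG hM.1
  · haveI : Std.Symm (fun e f : Sym2 V => ∀ v : V, v ∈ e → v ∉ f) := ⟨rel_symm⟩
    rw [Finset.coe_insert, Set.pairwise_insert_of_symm]
    exact ⟨hM.2, fun f hf _ v hv hvf => hdisj v hv (mem_cov.mpr ⟨f, hf, hvf⟩)⟩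

lemma double_count (G : SimpleGraph V) (k : ℕ) :
    (k + 1) * mCount G (k + 1) =
      ∑ M ∈ (matchings G).filter (fun A => A.card = k), (extE G M).card := by
  classical
  have h1 : (k + 1) * mCount G (k + 1)
      = ∑ M ∈ (matchings G).filter (fun A => A.card = k + 1), M.card := by
    rw [Finset.sum_congr rfl (fun M hM => (Finset.mem_filter.mp hM).2),
      Finset.sum_const, smul_eq_mul, mul_comm, mCount]
  rw [h1, ← Finset.card_sigma, ← Finset.card_sigma]
  refine Finset.card_bij'
    (fun p _ => (⟨p.1.erase p.2, p.2⟩ : Σ _ : Finset (Sym2 V), Sym2 V))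
    (fun p _ => (⟨insert p.2 p.1, p.2⟩ : Σ _ : Finset (Sym2 V), Sym2 V))
    ?_ ?_ ?_ ?_
  · rintro ⟨M, e⟩ hp
    rw [Finset.mem_sigma] at hp ⊢
    obtain ⟨hM, he⟩ := hp
    rw [Finset.mem_filter, mem_matchings] at hM
    obtain ⟨hMmatch, hcard⟩ := hM
    refine ⟨?_, mem_extE_erase hMmatch he⟩
    rw [Finset.mem_filter, mem_matchings]
    exact ⟨isMatchingSet_erase hMmatch e,
      by rw [Finset.card_erase_of_mem he, hcard]; omega⟩
  · rintro ⟨M, e⟩ hp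
    rw [Finset.mem_sigma] at hp ⊢
    obtain ⟨hM, he⟩ := hp
    rw [Finset.mem_filter, mem_matchings] at hM
    obtain ⟨hMmatch, hcard⟩ := hM
    obtain ⟨hins, henot⟩ := insert_matching hMmatch he
    refine ⟨?_, Finset.mem_insert_self e M⟩
    rw [Finset.mem_filter, mem_matchings]
    exact ⟨hins, by rw [Finset.card_insert_of_notMem henot, hcard]⟩
  · rintro ⟨M, e⟩ hp
    rw [Finset.mem_sigma] at hp
    simp [Finset.insert_erase hp.2]
  · rintro ⟨M, e⟩ hp
    rw [Finset.mem_sigma] at hp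
    obtain ⟨hM, he⟩ := hp
    rw [Finset.mem_filter, mem_matchings] at hM
    obtain ⟨hMmatch, -⟩ := hM
    obtain ⟨-, henot⟩ := insert_matching hMmatch he
    simp [Finset.erase_insert henot]

lemma extE_top_eq {M : Finset (Sym2 V)} :
    extE (⊤ : SimpleGraph V) M
      = ((Finset.univ \ cov M).sym2).filter (fun e => ¬ e.IsDiag) := by
  classical
  ext e
  simp only [extE, Finset.mem_filter, Finset.mem_univ, true_and,
    SimpleGraph.edgeSet_top, Set.mem_setOf_eq, Finset.mem_sym2_iff, Finset.mem_sdiff]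
  tauto

lemma card_sym2_nd (T : Finset V) :
    ((T.sym2).filter (fun e => ¬ e.IsDiag)).card = T.card.choose 2 := by
  classical
  have hdiag : (T.sym2).filter (fun e => e.IsDiag) = T.image Sym2.diag := by
    ext e
    simp only [Finset.mem_filter, Finset.mem_image, Finset.mem_sym2_iff]
    constructor
    · rintro ⟨hmem, hd⟩
      rw [← Sym2.mem_diagSet, ← Sym2.range_diag] at hd
      obtain ⟨a, rfl⟩ := hd
      exact ⟨a, hmem a (by simp [Sym2.diag]), rfl⟩
    · rintro ⟨a, ha, rfl⟩
      refine ⟨fun b hb => ?_, Sym2.diag_isDiag a⟩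
      rw [Sym2.diag, Sym2.mem_iff] at hb
      rcases hb with rfl | rfl <;> exact ha
  have h2 := Finset.card_filter_add_card_filter_not
    (s := T.sym2) (p := fun e : Sym2 V => e.IsDiag)
  rw [hdiag, Finset.card_image_of_injective _ Sym2.diag_injective, Finset.card_sym2] at h2
  have h3 : (T.card + 1).choose 2 = T.card + T.card.choose 2 := by
    rw [Nat.choose_succ_succ, Nat.choose_one_right]
  omega

lemma card_filter_mem_sym2 {e : Sym2 V} (h : ¬ e.IsDiag) :
    (Finset.univ.filter (· ∈ e)).card = 2 := by
  induction e using Sym2.ind with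
  | _ a b =>
    have hab : a ≠ b := by simpa using h
    have heq : Finset.univ.filter (· ∈ s(a, b)) = {a, b} := by
      ext v; simp [Sym2.mem_iff]
    rw [heq, Finset.card_insert_of_notMem (by simpa using hab), Finset.card_singleton]

lemma cov_card {G : SimpleGraph V} {M : Finset (Sym2 V)} (hM : IsMatchingSet G M) :
    (cov M).card = 2 * M.card := by
  classical
  rw [cov, Finset.card_biUnion]
  · rw [Finset.sum_congr rfl (fun e he => card_filter_mem_sym2
      (G.not_isDiag_of_mem_edgeSet (hM.1 he))), Finset.sum_const, smul_eq_mul, mul_comm]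
  · intro e he f hf hef
    rw [Function.onFun, Finset.disjoint_left]
    intro v hv hvf
    simp only [Finset.mem_filter] at hv hvf
    exact hM.2 (Finset.mem_coe.mpr he) (Finset.mem_coe.mpr hf) hef v hv.2 hvf.2

lemma card_extE_top {M : Finset (Sym2 V)} {k : ℕ}
    (hM : IsMatchingSet (⊤ : SimpleGraph V) M) (hcard : M.card = k) :
    (extE (⊤ : SimpleGraph V) M).card = (Fintype.card V - 2 * k).choose 2 := by
  rw [extE_top_eq, card_sym2_nd, Finset.card_sdiff_of_subset (Finset.subset_univ _),
    Finset.card_univ, cov_card hM, hcard]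

lemma step_le (G : SimpleGraph V) (k : ℕ) :
    (k + 1) * mCount G (k + 1) ≤ mCount G k * (Fintype.card V - 2 * k).choose 2 := by
  classical
  rw [double_count]
  have hterm : ∀ M ∈ (matchings G).filter (fun A => A.card = k),
      (extE G M).card ≤ (Fintype.card V - 2 * k).choose 2 := by
    intro M hM
    rw [Finset.mem_filter, mem_matchings] at hM
    obtain ⟨hMmatch, hcard⟩ := hM
    have hMtop : IsMatchingSet (⊤ : SimpleGraph V) M :=
      ⟨hMmatch.1.trans (SimpleGraph.edgeSet_mono le_top), hMmatch.2⟩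
    have hsub : extE G M ⊆ extE (⊤ : SimpleGraph V) M := by
      intro e he
      rw [mem_extE] at he ⊢
      exact ⟨SimpleGraph.edgeSet_mono le_top he.1, he.2⟩
    calc (extE G M).card ≤ (extE (⊤ : SimpleGraph V) M).card := Finset.card_le_card hsub
      _ = (Fintype.card V - 2 * k).choose 2 := card_extE_top hMtop hcard
  refine (Finset.sum_le_card_nsmul _ _ _ hterm).trans_eq ?_
  rw [smul_eq_mul, mCount]

lemma step_eq (k : ℕ) :
    (k + 1) * mCount (⊤ : SimpleGraph V) (k + 1)
      = mCount (⊤ : SimpleGraph V) k * (Fintype.card V - 2 * k).choose 2 := by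
  classical
  rw [double_count]
  have hterm : ∀ M ∈ (matchings (⊤ : SimpleGraph V)).filter (fun A => A.card = k),
      (extE (⊤ : SimpleGraph V) M).card = (Fintype.card V - 2 * k).choose 2 := by
    intro M hM
    rw [Finset.mem_filter, mem_matchings] at hM
    exact card_extE_top hM.1 hM.2
  rw [Finset.sum_congr rfl hterm, Finset.sum_const, smul_eq_mul, mCount]

lemma main_aux (G : SimpleGraph V) (l k : ℕ) (hl : l ≤ k) :
    mCount (⊤ : SimpleGraph V) l * mCount G k
      ≤ mCount (⊤ : SimpleGraph V) k * mCount G l := by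
  induction k with
  | zero =>
    obtain rfl : l = 0 := Nat.le_zero.mp hl
    exact le_refl _
  | succ k ih =>
    rcases eq_or_lt_of_le hl with rfl | h
    · exact le_refl _
    · have hlk : l ≤ k := Nat.lt_succ_iff.mp h
      have IH := ih hlk
      have h1 := step_le G k
      have h2 := step_eq (V := V) k
      set C := (Fintype.card V - 2 * k).choose 2 with hC
      have key : (k + 1) * (mCount (⊤ : SimpleGraph V) l * mCount G (k + 1))
          ≤ (k + 1) * (mCount (⊤ : SimpleGraph V) (k + 1) * mCount G l) := by
        calc (k + 1) * (mCount (⊤ : SimpleGraph V) l * mCount G (k + 1))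
            = mCount (⊤ : SimpleGraph V) l * ((k + 1) * mCount G (k + 1)) := by ring
          _ ≤ mCount (⊤ : SimpleGraph V) l * (mCount G k * C) :=
              Nat.mul_le_mul (le_refl _) h1
          _ = (mCount (⊤ : SimpleGraph V) l * mCount G k) * C := by ring
          _ ≤ (mCount (⊤ : SimpleGraph V) k * mCount G l) * C :=
              Nat.mul_le_mul IH (le_refl _)
          _ = (mCount (⊤ : SimpleGraph V) k * C) * mCount G l := by ring
          _ = ((k + 1) * mCount (⊤ : SimpleGraph V) (k + 1)) * mCount G l := by
              rw [← h2]
          _ = (k + 1) * (mCount (⊤ : SimpleGraph V) (k + 1) * mCount G l) := by ring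
      exact Nat.le_of_mul_le_mul_left key (Nat.succ_pos k)

theorem mCount_complete_ratio_le_general (n : ℕ) (G : SimpleGraph (Fin n)) (k l : ℕ)
    (hl : l ≤ k) (hk : k ≤ matchNum G) :
    mCount (⊤ : SimpleGraph (Fin n)) l * mCount G k ≤
      mCount (⊤ : SimpleGraph (Fin n)) k * mCount G l :=
  main_aux G l k hl

end AvgMatching
end
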